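/- Let B ⊆ A be a C-Galois extension. Then the entwining map ψ such that A ∈ M_A^C(ψ) (with structure maps m and Δ_A) is unique: if ψ̃ : C ⊗ A → A ⊗ C is any entwining map with Δ_A(a a') = a_{(0)} ψ̃(a_{(1)} ⊗ a') for all a, a' ∈ A, then ψ̃ = ψ, the canonical entwining map ψ(c ⊗ a) = c^{(1)}(c^{(2)}a)_{(0)} ⊗ (c^{(2)}a)_{(1)}. -/
import Mathlib


open TensorProduct LinearMap Coalgebra

variable {k A C : Type*} [Field k] [Ring A] [Algebra k A]
  [AddCommGroup C] [Module k C] [Coalgebra k C]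

/-- The four axioms of an entwining structure `(A, C, ψ)`. -/
def IsEntwining (ψ : C ⊗[k] A →ₗ[k] A ⊗[k] C) : Prop :=
  (ψ ∘ₗ (LinearMap.mul' k A).lTensor C ∘ₗ (TensorProduct.assoc k C A A).toLinearMap
      = (LinearMap.mul' k A).rTensor C ∘ₗ (TensorProduct.assoc k A A C).symm.toLinearMap
        ∘ₗ ψ.lTensor A ∘ₗ (TensorProduct.assoc k A C A).toLinearMap ∘ₗ ψ.rTensor A)
  ∧ (∀ c : C, ψ (c ⊗ₜ[k] (1 : A)) = (1 : A) ⊗ₜ[k] c)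
  ∧ ((comul (R := k) (A := C)).lTensor A ∘ₗ ψ
      = (TensorProduct.assoc k A C C).toLinearMap ∘ₗ ψ.rTensor C
        ∘ₗ (TensorProduct.assoc k C A C).symm.toLinearMap ∘ₗ ψ.lTensor C
        ∘ₗ (TensorProduct.assoc k C C A).toLinearMap ∘ₗ (comul (R := k) (A := C)).rTensor A)
  ∧ ((TensorProduct.rid k A).toLinearMap ∘ₗ (counit (R := k) (A := C)).lTensor A ∘ₗ ψ
      = (TensorProduct.lid k A).toLinearMap ∘ₗ (counit (R := k) (A := C)).rTensor A)

/-- `ρ : A → A ⊗ C` is a (counital, coassociative) right `C`-comodule structure. -/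
def IsComodule (ρ : A →ₗ[k] A ⊗[k] C) : Prop :=
  ((comul (R := k) (A := C)).lTensor A ∘ₗ ρ
      = (TensorProduct.assoc k A C C).toLinearMap ∘ₗ ρ.rTensor C ∘ₗ ρ)
  ∧ ((TensorProduct.rid k A).toLinearMap
      ∘ₗ (counit (R := k) (A := C)).lTensor A ∘ₗ ρ = LinearMap.id)

/-- The coinvariants `B = A^{co C}` of a coaction `ρ`. -/
def coinvSet (ρ : A →ₗ[k] A ⊗[k] C) : Set A :=
  {b : A | ∀ a : A, ρ (b * a) = (LinearMap.mulLeft k b).rTensor C (ρ a)}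

/-- The canonical map `A ⊗ A → A ⊗ C`, `a ⊗ a' ↦ a · ρ a'`, whose factorisation
through `A ⊗_B A` is the canonical Galois map `can`. -/
noncomputable def canF (ρ : A →ₗ[k] A ⊗[k] C) : A ⊗[k] A →ₗ[k] A ⊗[k] C :=
  (LinearMap.mul' k A).rTensor C ∘ₗ (TensorProduct.assoc k A A C).symm.toLinearMap
    ∘ₗ ρ.lTensor A

/-- The kernel of `A ⊗ A ↠ A ⊗_B A`: the subspace spanned by
`a b ⊗ a' - a ⊗ b a'` for `b ∈ B = A^{co C}`. -/
noncomputable def relJ (ρ : A →ₗ[k] A ⊗[k] C) : Submodule k (A ⊗[k] A) :=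
  Submodule.span k {x : A ⊗[k] A | ∃ (a a' b : A), b ∈ coinvSet ρ
    ∧ x = (a * b) ⊗ₜ[k] a' - a ⊗ₜ[k] (b * a')}

/-- `B ⊆ A` is a `C`-Galois extension: the canonical map
`can : A ⊗_B A → A ⊗ C` is bijective; equivalently, `canF ρ` is surjective
with kernel exactly `relJ ρ`. -/
def IsCGalois (ρ : A →ₗ[k] A ⊗[k] C) : Prop :=
  Function.Surjective (canF ρ) ∧ LinearMap.ker (canF ρ) = relJ ρ

/-- A (linear) lift of the translation map `τ = can⁻¹(1 ⊗ -) : C → A ⊗_B A`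
to `A ⊗ A`. -/
def IsTranslationLift (ρ : A →ₗ[k] A ⊗[k] C) (τ : C →ₗ[k] A ⊗[k] A) : Prop :=
  ∀ c : C, canF ρ (τ c) = (1 : A) ⊗ₜ[k] c

/-- The canonical entwining map `ψ = can ∘ (A ⊗_B m) ∘ (τ ⊗ A)` associated to a
`C`-Galois extension, expressed through a lift `τ` of the translation map:
`ψ (c ⊗ a) = c⁽¹⁾ ((c⁽²⁾ a)₍₀₎) ⊗ (c⁽²⁾ a)₍₁₎`. -/
noncomputable def canPsi (ρ : A →ₗ[k] A ⊗[k] C) (τ : C →ₗ[k] A ⊗[k] A) :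
    C ⊗[k] A →ₗ[k] A ⊗[k] C :=
  canF ρ ∘ₗ (LinearMap.mul' k A).lTensor A
    ∘ₗ (TensorProduct.assoc k A A A).toLinearMap ∘ₗ τ.rTensor A

/-- The right `A`-action `(m ⊗ C) ∘ (A ⊗ ψ)` on `A ⊗ C` induced by an entwining map. -/
noncomputable def actPsi (ψ : C ⊗[k] A →ₗ[k] A ⊗[k] C) :
    (A ⊗[k] C) ⊗[k] A →ₗ[k] A ⊗[k] C :=
  (LinearMap.mul' k A).rTensor C ∘ₗ (TensorProduct.assoc k A A C).symm.toLinearMap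
    ∘ₗ ψ.lTensor A ∘ₗ (TensorProduct.assoc k A C A).toLinearMap

private lemma aux_mulLeft (x : A) (z : A ⊗[k] C) :
    (LinearMap.mul' k A).rTensor C ((TensorProduct.assoc k A A C).symm (x ⊗ₜ[k] z))
      = (LinearMap.mulLeft k x).rTensor C z := by
  induction z using TensorProduct.induction_on with
  | zero => simp
  | tmul u d => simp [LinearMap.mul'_apply]
  | add z₁ z₂ h₁ h₂ => simp [tmul_add, h₁, h₂]

private lemma canF_tmul (ρ : A →ₗ[k] A ⊗[k] C) (x y : A) :
    canF ρ (x ⊗ₜ[k] y) = (LinearMap.mulLeft k x).rTensor C (ρ y) := by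
  simp [canF, aux_mulLeft]

private lemma actPsi_tmul (ψ : C ⊗[k] A →ₗ[k] A ⊗[k] C) (u : A) (d : C) (a : A) :
    actPsi ψ ((u ⊗ₜ[k] d) ⊗ₜ[k] a) = (LinearMap.mulLeft k u).rTensor C (ψ (d ⊗ₜ[k] a)) := by
  simp [actPsi, aux_mulLeft]

private lemma actPsi_mulLeft (ψ : C ⊗[k] A →ₗ[k] A ⊗[k] C) (x a : A) (z : A ⊗[k] C) :
    (LinearMap.mulLeft k x).rTensor C (actPsi ψ (z ⊗ₜ[k] a))
      = actPsi ψ (((LinearMap.mulLeft k x).rTensor C z) ⊗ₜ[k] a) := by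
  induction z using TensorProduct.induction_on with
  | zero => simp
  | tmul u d =>
    rw [actPsi_tmul, rTensor_tmul, mulLeft_apply, actPsi_tmul,
      ← rTensor_comp_apply, ← LinearMap.mulLeft_mul]
  | add z₁ z₂ h₁ h₂ => simp [add_tmul, h₁, h₂]

/-- the canonical entwining map of a `C`-Galois extension is the unique
entwining map `ψ̃` with `Δ_A (a a') = a₍₀₎ ψ̃(a₍₁₎ ⊗ a')`, i.e. `A ∈ M_A^C(ψ̃)`
with structure maps `m` and `Δ_A`. -/
theorem canPsi_unique (ρ : A →ₗ[k] A ⊗[k] C)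
    (hρ : IsComodule ρ) (hGal : IsCGalois ρ)
    (τ : C →ₗ[k] A ⊗[k] A) (hτ : IsTranslationLift ρ τ)
    (ψ' : C ⊗[k] A →ₗ[k] A ⊗[k] C) (hψ' : IsEntwining ψ')
    (hmod : ρ ∘ₗ LinearMap.mul' k A = actPsi ψ' ∘ₗ ρ.rTensor A) :
    ψ' = canPsi ρ τ := by
  apply TensorProduct.ext'
  intro c a
  have key : ∀ z : A ⊗[k] A,
      canF ρ ((LinearMap.mul' k A).lTensor A ((TensorProduct.assoc k A A A) (z ⊗ₜ[k] a)))
        = actPsi ψ' ((canF ρ z) ⊗ₜ[k] a) := by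
    intro z
    induction z using TensorProduct.induction_on with
    | zero => rw [zero_tmul, LinearEquiv.map_zero, map_zero, map_zero, zero_tmul, map_zero]
    | tmul x y =>
      have h := LinearMap.congr_fun hmod (y ⊗ₜ[k] a)
      simp only [LinearMap.comp_apply, LinearMap.mul'_apply, rTensor_tmul] at h
      rw [TensorProduct.assoc_tmul, lTensor_tmul, LinearMap.mul'_apply,
        canF_tmul, h, actPsi_mulLeft, canF_tmul]
    | add z₁ z₂ h₁ h₂ => simp only [add_tmul, map_add, h₁, h₂]
  have : canPsi ρ τ (c ⊗ₜ[k] a) = actPsi ψ' ((canF ρ (τ c)) ⊗ₜ[k] a) := by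
    rw [canPsi]
    simp only [LinearMap.comp_apply, rTensor_tmul]
    exact key (τ c)
  rw [this, hτ, actPsi_tmul, LinearMap.mulLeft_one, rTensor_id, LinearMap.id_apply]
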